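/- arXiv:1906.01588 — 5 statements merged into one kernel-verified Lean document; each statement's English description precedes it below -/
import Mathlib

section
/- Let G be a continuous semigroup on a topological space X generated by a family S of continuous self-maps, with G* = G \ S, and let x, y ∈ X. Suppose there is a sequence (f_k) of elements of G such that f_k(x) → y as k → ∞, and such that for every index N there exist an index m > N and some g ∈ G* with f_m = g ∘ f_N. Then y is a nonwandering point for G. -/
/-- `x` is a nonwandering point for a semigroup `G` generated by the family `S`
(`G* = G \ S`): every neighborhood `U` of `x` satisfies `g(U) ∩ U ≠ ∅` for some `g ∈ G*`. -/
def Nonwandering {X : Type*} [TopologicalSpace X] (G S : Set (X → X)) (x : X) : Prop :=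
  ∀ U ∈ nhds x, ∃ g ∈ G \ S, ((g '' U) ∩ U).Nonempty

theorem omegaLimit_mem_nonwandering_general {X : Type*} [TopologicalSpace X] (G S : Set (X → X))
    (x y : X) (f : ℕ → X → X)
    (hlim : Filter.Tendsto (fun k => f k x) Filter.atTop (nhds y))
    (hchain : ∀ N : ℕ, ∃ m > N, ∃ g ∈ G \ S, f m = g ∘ f N) :
    Nonwandering G S y := by
  intro U hU
  obtain ⟨N, hN⟩ := Filter.eventually_atTop.mp (hlim.eventually_mem hU)
  obtain ⟨m, hmN, g, hg, hfm⟩ := hchain N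
  -- `f N x ∈ U` is sent by `g` to `f m x ∈ U`.
  refine ⟨g, hg, f m x, ?_, hN m hmN.le⟩
  rw [hfm]
  exact Set.mem_image_of_mem g (hN N le_rfl)

/-- Let `G` be a continuous semigroup generated by `S`, with `G* = G \ S`, and `x, y ∈ X`.
If there is a sequence `(f k)` in `G` with `f k x → y`, such that for every `N` there are
`m > N` and `g ∈ G*` with `f m = g ∘ f N`, then `y` is a nonwandering point for `G`. -/
theorem omegaLimit_mem_nonwandering {X : Type*} [TopologicalSpace X] (G S : Set (X → X))
    (hScont : ∀ s ∈ S, Continuous s)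
    (hcont : ∀ g ∈ G, Continuous g)
    (hcomp : ∀ g ∈ G, ∀ h ∈ G, g ∘ h ∈ G)
    (hSG : S ⊆ G)
    (hgen : ∀ g ∈ G, ∃ l : List (X → X), l ≠ [] ∧ (∀ f ∈ l, f ∈ S) ∧ g = l.foldr (· ∘ ·) id)
    (x y : X) (f : ℕ → X → X)
    (hfG : ∀ k, f k ∈ G)
    (hlim : Filter.Tendsto (fun k => f k x) Filter.atTop (nhds y))
    (hchain : ∀ N : ℕ, ∃ m > N, ∃ g ∈ G \ S, f m = g ∘ f N) :
    Nonwandering G S y :=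
  omegaLimit_mem_nonwandering_general G S x y f hlim hchain
end

section
/- Let G be a continuous semigroup on a topological space X generated by a family S of continuous self-maps, with G* = G \ S, and let x ∈ X. Suppose there is a sequence (f_k) of elements of G such that f_k(x) → x as k → ∞, and such that for every index N there exist an index m > N and some g ∈ G* with f_m = g ∘ f_N. Then x is a nonwandering point for G. -/
theorem recurrent_mem_nonwandering_general {X : Type*} [TopologicalSpace X] (G S : Set (X → X))
    (x : X) (f : ℕ → X → X)
    (hlim : Filter.Tendsto (fun k => f k x) Filter.atTop (nhds x))
    (hchain : ∀ N : ℕ, ∃ m > N, ∃ g ∈ G \ S, f m = g ∘ f N) :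
    Nonwandering G S x := by
  intro U hU
  obtain ⟨K, hK⟩ := Filter.eventually_atTop.mp (hlim hU)
  obtain ⟨m, hKm, g, hg, hfm⟩ := hchain K
  -- `g` carries `f K x ∈ U` to `f m x ∈ U`.
  exact ⟨g, hg, f m x, ⟨f K x, hK K le_rfl, (congrFun hfm x).symm⟩, hK m hKm.le⟩

/-- Let `G` be a continuous semigroup generated by `S`, with `G* = G \ S`, and `x ∈ X`.
If there is a sequence `(f k)` in `G` with `f k x → x`, such that for every `N` there are
`m > N` and `g ∈ G*` with `f m = g ∘ f N`, then `x` is a nonwandering point for `G`. -/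
theorem recurrent_mem_nonwandering {X : Type*} [TopologicalSpace X] (G S : Set (X → X))
    (hScont : ∀ s ∈ S, Continuous s)
    (hcont : ∀ g ∈ G, Continuous g)
    (hcomp : ∀ g ∈ G, ∀ h ∈ G, g ∘ h ∈ G)
    (hSG : S ⊆ G)
    (hgen : ∀ g ∈ G, ∃ l : List (X → X), l ≠ [] ∧ (∀ f ∈ l, f ∈ S) ∧ g = l.foldr (· ∘ ·) id)
    (x : X) (f : ℕ → X → X)
    (hfG : ∀ k, f k ∈ G)
    (hlim : Filter.Tendsto (fun k => f k x) Filter.atTop (nhds x))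
    (hchain : ∀ N : ℕ, ∃ m > N, ∃ g ∈ G \ S, f m = g ∘ f N) :
    Nonwandering G S x :=
  recurrent_mem_nonwandering_general G S x f hlim hchain
end

section
/- Let G be an abelian continuous semigroup on a topological space X. Then the set Ω_S(G) of strongly nonwandering points for G is an invariant subset of X. -/
/-- `x` is a strongly nonwandering point for a semigroup `G`: for every neighborhood `U` of
`x` and every `g ∈ G` there is `h ∈ Ĝ = G ∪ {identity}` with `(h ∘ g)(U) ∩ U ≠ ∅`. -/
def StronglyNonwandering {X : Type*} [TopologicalSpace X] (G : Set (X → X)) (x : X) : Prop :=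
  ∀ U ∈ nhds x, ∀ g ∈ G, ∃ h ∈ G ∪ {(id : X → X)}, (((h ∘ g) '' U) ∩ U).Nonempty

theorem comp_mem_of_mem_union_id {X : Type*} {G : Set (X → X)}
    (hcomp : ∀ g ∈ G, ∀ h ∈ G, g ∘ h ∈ G) {g h : X → X} (hg : g ∈ G)
    (hh : h ∈ G ∪ {id}) : g ∘ h ∈ G := by
  rcases hh with hh | rfl
  · exact hcomp g hg h hh
  · exact hg

/-- Pull `U` back along `g` and test `x` against `k ∘ g`: if `h` brings a point of `g ⁻¹' U`
back there, then `g ∘ h` brings its image in `U` back to `U`. -/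
theorem StronglyNonwandering.map {X : Type*} [TopologicalSpace X] {G : Set (X → X)}
    (hcomp : ∀ g ∈ G, ∀ h ∈ G, g ∘ h ∈ G) {g : X → X} (hg : g ∈ G) (hgc : Continuous g)
    {x : X} (hx : StronglyNonwandering G x) : StronglyNonwandering G (g x) := by
  intro U hU k hk
  obtain ⟨h, hh, _, ⟨z, hz, rfl⟩, hzU⟩ :=
    hx (g ⁻¹' U) (hgc.continuousAt.preimage_mem_nhds hU) (k ∘ g) (hcomp k hk g hg)
  exact ⟨g ∘ h, Or.inl (comp_mem_of_mem_union_id hcomp hg hh), _, ⟨g z, hz, rfl⟩, hzU⟩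

theorem stronglyNonwandering_invariant_general {X : Type*} [TopologicalSpace X] (G : Set (X → X))
    (hcont : ∀ g ∈ G, Continuous g)
    (hcomp : ∀ g ∈ G, ∀ h ∈ G, g ∘ h ∈ G) :
    ∀ g ∈ G, ∀ x ∈ {x | StronglyNonwandering G x}, g x ∈ {x | StronglyNonwandering G x} :=
  fun g hg _ hx => hx.map hcomp hg (hcont g hg)

/-- If `G` is an abelian continuous semigroup on a topological space `X`, then the set
`Ω_S(G)` of strongly nonwandering points is an invariant subset of `X`. -/
theorem stronglyNonwandering_invariant {X : Type*} [TopologicalSpace X] (G : Set (X → X))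
    (hcont : ∀ g ∈ G, Continuous g)
    (hcomp : ∀ g ∈ G, ∀ h ∈ G, g ∘ h ∈ G)
    (habel : ∀ g ∈ G, ∀ h ∈ G, g ∘ h = h ∘ g) :
    ∀ g ∈ G, ∀ x ∈ {x | StronglyNonwandering G x}, g x ∈ {x | StronglyNonwandering G x} :=
  stronglyNonwandering_invariant_general G hcont hcomp
end

section
/- Let G be an abelian continuous semigroup on a metric space (X, d). Then the set CR(G) of chain recurrent points for G is an invariant subset of X. -/
/-- An `(ε, g)`-chain from `a` to `b` for the semigroup `G` on a metric space `X`: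
a finite sequence `a = x₀, …, xₙ = b` (with `n ≥ 1`) together with maps
`g₀, …, g_{n-1} ∈ Ĝ = G ∪ {identity}` such that `d(gᵢ(g(xᵢ)), x_{i+1}) < ε` for each `i`. -/
def EpsChain {X : Type*} [MetricSpace X] (G : Set (X → X)) (ε : ℝ) (g : X → X)
    (a b : X) : Prop :=
  ∃ n : ℕ, 0 < n ∧ ∃ x : Fin (n + 1) → X, ∃ gs : Fin n → X → X,
    x 0 = a ∧ x (Fin.last n) = b ∧
    ∀ i : Fin n, gs i ∈ G ∪ {(id : X → X)} ∧ dist (gs i (g (x i.castSucc))) (x i.succ) < ε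

/-- `x` is a chain recurrent point for `G`: for every `ε > 0` and every `g ∈ G` there is an
`(ε, g)`-chain from `x` to itself. -/
def ChainRecurrent {X : Type*} [MetricSpace X] (G : Set (X → X)) (x : X) : Prop :=
  ∀ ε > 0, ∀ g ∈ G, EpsChain G ε g x x

/-!
Let `x` be chain recurrent, `g, h ∈ G` and `ε > 0`; choose `δ` so that `g` maps the `δ`-ball
around `x` into the `ε`-ball around `g x`. A `(min δ ε, h ∘ g)`-chain `x → x₁ → ⋯ → c → x`
becomes an `(ε, h)`-chain `g x → x₁ → ⋯ → c → g x`: the first step is unchanged, since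
`(h ∘ g) x = h (g x)`; in the middle steps the map `g` is moved past `h` by commutativity and
absorbed into the correcting map `gᵢ ∘ g`; the last step is pushed forward by `g`, which turns
the `δ`-jump onto `x` into an `ε`-jump onto `g x`.
-/

open Relation

namespace Relation

theorem transGen_iff_exists_fin {α : Type*} {r : α → α → Prop} {a b : α} :
    TransGen r a b ↔ ∃ n : ℕ, 0 < n ∧ ∃ x : Fin (n + 1) → α,
      x 0 = a ∧ x (Fin.last n) = b ∧ ∀ i : Fin n, r (x i.castSucc) (x i.succ) := by
  constructor
  · intro h
    induction h with
    | @single c hac => exact ⟨1, one_pos, ![a, c], rfl, rfl, fun i => by fin_cases i; exact hac⟩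
    | @tail c d _ hcd ih =>
      obtain ⟨n, -, x, hx0, hxn, hx⟩ := ih
      refine ⟨n + 1, n.succ_pos, Fin.snoc x d, by simpa using hx0, by simp, ?_⟩
      refine Fin.lastCases ?_ (fun i => ?_)
      · simpa [hxn] using hcd
      · rw [Fin.succ_castSucc, Fin.snoc_castSucc, Fin.snoc_castSucc]
        exact hx i
  · rintro ⟨n, hn, x, rfl, rfl, hx⟩
    induction n with
    | zero => exact absurd hn (lt_irrefl 0)
    | succ n ih =>
      rcases Nat.eq_zero_or_pos n with rfl | hn
      · exact .single (hx 0)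
      · exact .tail (ih hn (Fin.init x) fun i => hx i.castSucc) (hx (Fin.last n))

end Relation

theorem comp_mem_union_id {X : Type*} {G : Set (X → X)}
    (hcomp : ∀ g ∈ G, ∀ h ∈ G, g ∘ h ∈ G) {k l : X → X}
    (hk : k ∈ G ∪ {id}) (hl : l ∈ G ∪ {id}) : k ∘ l ∈ G ∪ {id} := by
  rcases hk with hk | rfl
  · rcases hl with hl | rfl
    · exact .inl (hcomp k hk l hl)
    · exact .inl hk
  · exact hl

section ChainStep

variable {X : Type*} [MetricSpace X] {G : Set (X → X)}

def ChainStep (G : Set (X → X)) (ε : ℝ) (g : X → X) (y z : X) : Prop :=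
  ∃ k ∈ G ∪ {id}, dist (k (g y)) z < ε

theorem epsChain_iff_transGen {ε : ℝ} {g : X → X} {a b : X} :
    EpsChain G ε g a b ↔ TransGen (ChainStep G ε g) a b := by
  simp only [EpsChain, transGen_iff_exists_fin, ChainStep, Classical.skolem, exists_and_left]

theorem ChainStep.mono {δ ε : ℝ} {g : X → X} {y z : X} (hδε : δ ≤ ε)
    (h : ChainStep G δ g y z) : ChainStep G ε g y z :=
  let ⟨k, hk, hd⟩ := h
  ⟨k, hk, hd.trans_le hδε⟩

theorem ChainStep.of_comp_of_commute (hcomp : ∀ g ∈ G, ∀ h ∈ G, g ∘ h ∈ G) {ε : ℝ}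
    {g h : X → X} (hg : g ∈ G) (hgh : g ∘ h = h ∘ g) {y z : X}
    (hs : ChainStep G ε (h ∘ g) y z) : ChainStep G ε h y z := by
  obtain ⟨k, hk, hd⟩ := hs
  refine ⟨k ∘ g, comp_mem_union_id hcomp hk (.inl hg), ?_⟩
  rwa [Function.comp_apply, ← Function.comp_apply (f := g), hgh]

theorem ChainStep.map_target (hcomp : ∀ g ∈ G, ∀ h ∈ G, g ∘ h ∈ G) {δ ε : ℝ}
    {g h : X → X} (hg : g ∈ G) {y z : X}
    (hgz : ∀ w, dist w z < δ → dist (g w) (g z) < ε)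
    (hs : ChainStep G δ h y z) : ChainStep G ε h y (g z) :=
  let ⟨k, hk, hd⟩ := hs
  ⟨g ∘ k, comp_mem_union_id hcomp (.inl hg) hk, hgz _ hd⟩

end ChainStep

/-- If `G` is an abelian continuous semigroup on a metric space `(X, d)`, then the set `CR(G)`
of chain recurrent points for `G` is an invariant subset of `X`. -/
theorem chainRecurrent_invariant {X : Type*} [MetricSpace X] (G : Set (X → X))
    (hcont : ∀ g ∈ G, Continuous g)
    (hcomp : ∀ g ∈ G, ∀ h ∈ G, g ∘ h ∈ G)
    (habel : ∀ g ∈ G, ∀ h ∈ G, g ∘ h = h ∘ g) :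
    ∀ g ∈ G, ∀ x ∈ {x | ChainRecurrent G x}, g x ∈ {x | ChainRecurrent G x} := by
  intro g hg x hx ε hε h hh
  obtain ⟨δ, hδ, hgx⟩ := Metric.continuous_iff.mp (hcont g hg) x ε hε
  have hloop := epsChain_iff_transGen.mp <| hx _ (lt_min hδ hε) _ (hcomp h hh g hg)
  -- Cutting the loop at both ends (the middle part `x₁ →* x →* c` runs through `x` again)
  -- separates its first step from its last one, also when the loop has a single step.
  obtain ⟨x₁, hfirst, hx₁x⟩ := TransGen.head'_iff.mp hloop
  obtain ⟨c, hxc, hlast⟩ := TransGen.tail'_iff.mp hloop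
  have hcomm := habel g hg h hh
  have hmiddle : ReflTransGen (ChainStep G ε h) x₁ c :=
    (hx₁x.trans hxc).lift id fun _ _ hs =>
      (hs.mono (min_le_right δ ε)).of_comp_of_commute hcomp hg hcomm
  have hend : ChainStep G ε h c (g x) :=
    ((hlast.of_comp_of_commute hcomp hg hcomm).mono (min_le_left δ ε)).map_target hcomp hg hgx
  exact epsChain_iff_transGen.mpr <| .head' (hfirst.mono (min_le_right δ ε)) (hmiddle.tail hend)
end

section
/- Let g₁, g₂ : ℝ → ℝ be g₁(x) = x² and g₂(x) = x² − 1/2, and let G be the semigroup generated by {g₁, g₂} under composition. Then 0 is a limit point of the orbit Ob_G(1) = {g(1) : g ∈ G} ∪ {1} of the point 1, but 0 ∉ Ob_G(1); in particular, the orbit of the orbit point 1 is not a closed subset of ℝ. -/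
/-- `g₁(x) = x²`. -/
noncomputable def g1 : ℝ → ℝ := fun x => x ^ 2

/-- `g₂(x) = x² - 1/2`. -/
noncomputable def g2 : ℝ → ℝ := fun x => x ^ 2 - 1 / 2

/-- The semigroup generated by `g₁` and `g₂`: all finite (nonempty) compositions of them. -/
noncomputable def Gsemi : Set (ℝ → ℝ) :=
  {f | ∃ l : List (ℝ → ℝ), l ≠ [] ∧ (∀ u ∈ l, u = g1 ∨ u = g2) ∧ f = l.foldr (· ∘ ·) id}

/-- The orbit of the point `1` under the semigroup `G = ⟨g₁, g₂⟩`. -/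
noncomputable def Ob : Set ℝ := {y | ∃ g ∈ Gsemi, g 1 = y} ∪ {1}

lemma ob_closed (u : ℝ → ℝ) (hu : u = g1 ∨ u = g2) {y : ℝ} (hy : y ∈ Ob) : u y ∈ Ob := by
  rcases hy with ⟨g, ⟨l, hl, hmem, hfold⟩, hg⟩ | hy
  · left
    exact ⟨u ∘ g, ⟨u :: l, by simp, by
      intro v hv
      rcases List.mem_cons.mp hv with rfl | hv
      · exact hu
      · exact hmem v hv, by simp [hfold]⟩, by simp [hg]⟩
  · left
    refine ⟨u, ⟨[u], by simp, by simpa using hu, by simp⟩, ?_⟩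
    simp at hy
    simp [hy]

/-- the dyadic-with-odd-numerator invariant -/
def P (x : ℝ) : Prop := ∃ (a : ℤ) (e : ℕ), Odd a ∧ x = (a : ℝ) / 2 ^ e

lemma P_g1 {x : ℝ} (hx : P x) : P (g1 x) := by
  obtain ⟨a, e, ha, rfl⟩ := hx
  refine ⟨a ^ 2, 2 * e, ha.pow, ?_⟩
  show ((a:ℝ)/2^e) ^ 2 = _
  push_cast
  rw [div_pow, ← pow_mul, mul_comm]

lemma P_g2 {x : ℝ} (hx : P x) : P (g2 x) := by
  obtain ⟨a, e, ha, rfl⟩ := hx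
  obtain ⟨k, hk⟩ := ha.pow (n := 2)
  cases e with
  | zero =>
      refine ⟨2 * a ^ 2 - 1, 1, ⟨a ^ 2 - 1, by ring⟩, ?_⟩
      show ((a:ℝ)/2^0) ^ 2 - 1/2 = _
      push_cast
      ring
  | succ f =>
      refine ⟨a ^ 2 - 2 ^ (2 * f + 1), 2 * f + 2, ⟨k - 2 ^ (2 * f), by omega⟩, ?_⟩
      show ((a:ℝ)/2^(f+1)) ^ 2 - 1/2 = _
      push_cast
      rw [div_pow, ← pow_mul]
      rw [div_sub_div _ _ (by positivity) (by norm_num : (2:ℝ) ≠ 0)]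
      rw [div_eq_div_iff (by positivity) (by positivity)]
      ring

lemma P_of_mem_Ob {y : ℝ} (hy : y ∈ Ob) : P y := by
  have key : ∀ l : List (ℝ → ℝ), (∀ u ∈ l, u = g1 ∨ u = g2) →
      P (l.foldr (· ∘ ·) id 1) := by
    intro l
    induction l with
    | nil => intro _; exact ⟨1, 0, odd_one, by norm_num⟩
    | cons u t ih =>
        intro h
        have ht : P (t.foldr (· ∘ ·) id 1) := ih (fun v hv => h v (List.mem_cons_of_mem u hv))
        have hu := h u List.mem_cons_self
        simp only [List.foldr_cons, Function.comp_apply]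
        rcases hu with rfl | rfl
        · exact P_g1 ht
        · exact P_g2 ht
  rcases hy with ⟨g, ⟨l, _, hmem, rfl⟩, rfl⟩ | hy
  · exact key l hmem
  · simp at hy
    exact hy ▸ ⟨1, 0, odd_one, by norm_num⟩

lemma zero_not_mem_Ob : (0 : ℝ) ∉ Ob := by
  intro h
  obtain ⟨a, e, ha, heq⟩ := P_of_mem_Ob h
  have : (a : ℝ) = 0 := by
    field_simp at heq
    simpa using heq.symm
  have : a = 0 := by exact_mod_cast this
  subst this
  exact ((Int.not_odd_iff_even.mpr Even.zero)) ha

/-- For `g₁(x) = x²`, `g₂(x) = x² - 1/2` and `G = ⟨g₁, g₂⟩`, the point `0` is a limit point of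
the orbit `Ob_G(1)` of the orbit point `1`, but `0 ∉ Ob_G(1)`; in particular `Ob_G(1)` is not
a closed subset of `ℝ`. -/
theorem orbit_of_orbitPoint_not_closed :
    (0 : ℝ) ∈ closure Ob ∧ (0 : ℝ) ∉ Ob ∧ ¬ IsClosed Ob := by
  have hmem : ∀ n : ℕ, ((1:ℝ)/2) ^ (2 ^ n) ∈ Ob := by
    intro n
    induction n with
    | zero =>
        have : ((1:ℝ)/2) ^ (2 ^ 0) = g2 1 := by norm_num [g2]
        rw [this]
        exact ob_closed g2 (Or.inr rfl) (Or.inr rfl)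
    | succ k ih =>
        have : ((1:ℝ)/2) ^ (2 ^ (k+1)) = g1 (((1:ℝ)/2) ^ (2 ^ k)) := by
          simp [g1, ← pow_mul, pow_succ, pow_mul, mul_inv]
        rw [this]
        exact ob_closed g1 (Or.inl rfl) ih
  have htend : Filter.Tendsto (fun n : ℕ => ((1:ℝ)/2) ^ (2 ^ n)) Filter.atTop (nhds 0) := by
    have h1 : Filter.Tendsto (fun n : ℕ => ((1:ℝ)/2) ^ n) Filter.atTop (nhds 0) := by
      apply tendsto_pow_atTop_nhds_zero_of_lt_one <;> norm_num
    exact h1.comp (tendsto_pow_atTop_atTop_of_one_lt one_lt_two)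
  have hclos : (0 : ℝ) ∈ closure Ob :=
    mem_closure_of_tendsto htend (Filter.Eventually.of_forall hmem)
  refine ⟨hclos, zero_not_mem_Ob, fun hc => zero_not_mem_Ob (hc.closure_eq ▸ hclos)⟩
end
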